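/- arXiv:2305.04056 — 2 statements merged into one kernel-verified Lean document; each statement's English description precedes it below -/
import Mathlib

section
/- Let a, b, c, d be positive real numbers and τ ≥ 0 a real number, and assume a·b < d·(c+d). Then every complex number λ satisfying (λ + d)·(λ + c + d − (a·b/d)·Complex.exp(−λ·τ)) = 0 has negative real part (λ.re < 0). -/
/-!
The factor `λ + d` only vanishes at `λ = -d`. For the other factor, a root with `0 ≤ re λ`
would satisfy `c + d ≤ ‖λ + c + d‖ = (a b / d) e^{-τ re λ} ≤ a b / d`, contradicting
`a b < d (c + d)`: the delayed term can never beat the instantaneous decay rate.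
-/

open Complex

theorem re_neg_of_add_eq_mul_exp {k τ : ℝ} {K z : ℂ} (hτ : 0 ≤ τ) (hK : ‖K‖ < k)
    (h : z + k = K * exp (-z * τ)) : z.re < 0 := by
  by_contra! hz
  have hlow : k ≤ ‖z + k‖ := by
    have := re_le_norm (z + k)
    rw [add_re, ofReal_re] at this
    linarith
  have hexp : Real.exp (-z.re * τ) ≤ 1 :=
    Real.exp_le_one_iff.mpr (mul_nonpos_of_nonpos_of_nonneg (neg_nonpos.mpr hz) hτ)
  have hup : ‖z + k‖ ≤ ‖K‖ := by
    calc ‖z + k‖ = ‖K‖ * Real.exp (-z.re * τ) := by simp [h, norm_exp]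
      _ ≤ ‖K‖ := mul_le_of_le_one_right (norm_nonneg K) hexp
  linarith

theorem stmt_10_general (a b c d τ : ℝ) (ha : 0 < a) (hb : 0 < b) (hd : 0 < d)
    (hτ : 0 ≤ τ) (hstab : a * b < d * (c + d)) :
    ∀ lam : ℂ,
      (lam + (d : ℂ)) * (lam + (c : ℂ) + (d : ℂ) -
        ((a * b / d : ℝ) : ℂ) * Complex.exp (-lam * (τ : ℂ))) = 0 →
      lam.re < 0 := by
  intro lam h
  rcases mul_eq_zero.mp h with hroot | hroot
  · simpa [eq_neg_of_add_eq_zero_left hroot] using hd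
  · have hK : ‖((a * b / d : ℝ) : ℂ)‖ < c + d := by
      rw [norm_real, Real.norm_of_nonneg (by positivity), div_lt_iff₀ hd]
      linarith
    refine re_neg_of_add_eq_mul_exp (k := c + d) hτ hK ?_
    rw [ofReal_add]
    linear_combination hroot

theorem stmt_10 (a b c d τ : ℝ) (ha : 0 < a) (hb : 0 < b) (hc : 0 < c) (hd : 0 < d)
    (hτ : 0 ≤ τ) (hstab : a * b < d * (c + d)) :
    ∀ lam : ℂ,
      (lam + (d : ℂ)) * (lam + (c : ℂ) + (d : ℂ) -
        ((a * b / d : ℝ) : ℂ) * Complex.exp (-lam * (τ : ℂ))) = 0 →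
      lam.re < 0 :=
  stmt_10_general a b c d τ ha hb hd hτ hstab
end

section
/- Let a, b, c, d be positive real numbers and τ ≥ 0 a real number, and assume a·b > d·(c+d). Then there exists a real number λ > 0 with λ + c + d = (a·b/d)·Real.exp(−λ·τ); in particular the characteristic equation of the steady state E₁ has a positive real root for any value of the delay. -/
theorem stmt_11 (a b c d τ : ℝ) (ha : 0 < a) (hb : 0 < b) (hc : 0 < c) (hd : 0 < d)
    (hτ : 0 ≤ τ) (hunstab : a * b > d * (c + d)) :
    ∃ lam : ℝ, 0 < lam ∧ lam + c + d = (a * b / d) * Real.exp (-lam * τ) := by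
  set K := a * b / d with hK
  have hKpos : 0 < K := div_pos (mul_pos ha hb) hd
  set f : ℝ → ℝ := fun x => x + c + d - K * Real.exp (-x * τ) with hf
  have hcont : Continuous f := by
    fun_prop
  have hf0 : f 0 < 0 := by
    simp only [hf]
    norm_num
    have : c + d < K := by
      rw [hK, lt_div_iff₀ hd]
      linarith [hunstab]
    linarith
  have hfK : 0 ≤ f K := by
    simp only [hf]
    have h1 : Real.exp (-K * τ) ≤ 1 := by
      apply Real.exp_le_one_iff.mpr
      nlinarith
    nlinarith
  have hKle : (0:ℝ) ≤ K := hKpos.le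
  obtain ⟨lam, hmem, hroot⟩ := intermediate_value_Icc hKle hcont.continuousOn
    (Set.mem_Icc.mpr ⟨hf0.le, hfK⟩)
  refine ⟨lam, ?_, ?_⟩
  · rcases hmem with ⟨h0, _⟩
    rcases lt_or_eq_of_le h0 with h | h
    · exact h
    · exfalso
      rw [← h] at hroot
      linarith [hf0, hroot]
  · have : lam + c + d - K * Real.exp (-lam * τ) = 0 := hroot
    linarith
end
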